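/- For 0 < α ≤ 1, the margin-based α-loss z ↦ (α/(α-1))(1 - σ(z)^{1-1/α}) (with the case α=1 given by -log σ(z)) is convex on ℝ. -/

import Mathlib

noncomputable def sigmoid (z : ℝ) : ℝ := 1 / (1 + Real.exp (-z))

noncomputable def alphaLoss (α z : ℝ) : ℝ :=
  if α = 1 then -Real.log (sigmoid z)
  else (α / (α - 1)) * (1 - sigmoid z ^ (1 - 1 / α))

/-!
With `ℓ(z) = -log σ(z)`, the loss is `ℓ` for `α = 1` and `α / (1 - α) * (exp (β ℓ) - 1)` with
`β = 1/α - 1 ≥ 0` for `α < 1`. Since `ℓ' = σ - 1` is increasing, `ℓ` is convex, and so is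
`exp ∘ (β ℓ)` because `exp` is convex and increasing.
-/

open Set

theorem ConvexOn.exp {E : Type*} [AddCommMonoid E] [Module ℝ E] {s : Set E} {f : E → ℝ}
    (hf : ConvexOn ℝ s f) : ConvexOn ℝ s fun x => Real.exp (f x) :=
  ⟨hf.1, fun _ hx _ hy _ _ ha hb hab =>
    (Real.exp_le_exp.2 (hf.2 hx hy ha hb hab)).trans (convexOn_exp.2 trivial trivial ha hb hab)⟩

lemma sigmoid_eq_real_sigmoid : sigmoid = Real.sigmoid :=
  funext fun _ => one_div _

lemma hasDerivAt_neg_log_sigmoid (z : ℝ) :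
    HasDerivAt (fun z => -Real.log (Real.sigmoid z)) (Real.sigmoid z - 1) z := by
  have hσ := (Real.sigmoid_pos z).ne'
  have h := ((Real.hasDerivAt_sigmoid z).log hσ).neg
  rwa [mul_div_cancel_left₀ _ hσ, neg_sub] at h

lemma convexOn_neg_log_sigmoid : ConvexOn ℝ univ fun z => -Real.log (Real.sigmoid z) := by
  have hderiv : deriv (fun z => -Real.log (Real.sigmoid z)) = fun z => Real.sigmoid z - 1 :=
    funext fun z => (hasDerivAt_neg_log_sigmoid z).deriv
  refine Monotone.convexOn_univ_of_deriv
    (fun z => (hasDerivAt_neg_log_sigmoid z).differentiableAt) ?_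
  rw [hderiv]
  exact fun _ _ h => sub_le_sub_right (Real.sigmoid_monotone h) 1

lemma alphaLoss_one (z : ℝ) : alphaLoss 1 z = -Real.log (Real.sigmoid z) := by
  simp [alphaLoss, sigmoid_eq_real_sigmoid]

lemma alphaLoss_of_ne_one {α : ℝ} (hα : α ≠ 1) (z : ℝ) :
    alphaLoss α z =
      α / (1 - α) * Real.exp ((1 / α - 1) * -Real.log (Real.sigmoid z)) + α / (α - 1) := by
  have hα' : α - 1 ≠ 0 := sub_ne_zero.2 hα
  have hα'' : 1 - α ≠ 0 := sub_ne_zero.2 hα.symm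
  rw [alphaLoss, if_neg hα, sigmoid_eq_real_sigmoid, Real.rpow_def_of_pos (Real.sigmoid_pos z)]
  field_simp
  ring_nf

theorem alphaLoss_convexOn (α : ℝ) (hα : 0 < α) (hα1 : α ≤ 1) :
    ConvexOn ℝ Set.univ (fun z => alphaLoss α z) := by
  rcases hα1.eq_or_lt with rfl | hlt
  · simpa only [alphaLoss_one] using convexOn_neg_log_sigmoid
  have hβ : 0 ≤ 1 / α - 1 := by
    rw [sub_nonneg, le_div_iff₀ hα]
    linarith
  have hc : 0 ≤ α / (1 - α) := div_nonneg hα.le (by linarith)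
  simpa only [alphaLoss_of_ne_one hlt.ne, smul_eq_mul, Pi.add_def] using
    (ConvexOn.smul hc (ConvexOn.smul hβ convexOn_neg_log_sigmoid).exp).add_const _
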